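/- Let d be a positive integer that is not a perfect square, and let (x₁, y₁) be the fundamental (least positive) solution of x² - d·y² = 1. Then all positive integer solutions of x² - d·y² = 1 are given by x = V_n(2x₁, -1)/2 and y = y₁·U_n(2x₁, -1) for n ≥ 1, where U and V are the Lucas sequences of the first and second kind with parameters (2x₁, -1). -/

import Mathlib

/-- Lucas sequence of the first kind with parameters `(P, -1)`. -/
def lucasU (P : ℤ) : ℕ → ℤ
  | 0 => 0
  | 1 => 1
  | n + 2 => P * lucasU P (n + 1) - lucasU P n

/-- Lucas sequence of the second kind with parameters `(P, -1)`. -/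
def lucasV (P : ℤ) : ℕ → ℤ
  | 0 => 2
  | 1 => P
  | n + 2 => P * lucasV P (n + 1) - lucasV P n

/-!
Every positive solution of `x² - d y² = 1` is a power `a₁ ^ n` (`n ≥ 1`) of the fundamental
solution `a₁ = x₁ + y₁√d`. Since `a₁` has norm `1`, it is a root of `X² - 2x₁ X + 1`, so both
coordinates of `a₁ ^ n` satisfy the Lucas recurrence `s (n + 2) = 2x₁ s (n + 1) - s n`; comparing
initial values identifies `2 (a₁ ^ n).x` with `V_n(2x₁, -1)` and `(a₁ ^ n).y` with `y₁ U_n(2x₁, -1)`.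
-/

namespace Pell

variable {d : ℤ}

namespace Solution₁

theorem x_pow_add_two (a : Solution₁ d) (n : ℕ) :
    (a ^ (n + 2)).x = 2 * a.x * (a ^ (n + 1)).x - (a ^ n).x := by
  simp only [pow_succ, x_mul, y_mul]
  linear_combination (-(a ^ n).x) * a.prop

theorem y_pow_add_two (a : Solution₁ d) (n : ℕ) :
    (a ^ (n + 2)).y = 2 * a.x * (a ^ (n + 1)).y - (a ^ n).y := by
  simp only [pow_succ, x_mul, y_mul]
  linear_combination (-(a ^ n).y) * a.prop

theorem two_mul_x_pow_eq_lucasV (a : Solution₁ d) (n : ℕ) :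
    2 * (a ^ n).x = lucasV (2 * a.x) n := by
  induction n using Nat.twoStepInduction with
  | zero => simp [lucasV]
  | one => simp [lucasV]
  | more n ih ih1 => rw [lucasV, x_pow_add_two, ← ih, ← ih1]; ring

theorem y_pow_eq_mul_lucasU (a : Solution₁ d) (n : ℕ) :
    (a ^ n).y = a.y * lucasU (2 * a.x) n := by
  induction n using Nat.twoStepInduction with
  | zero => simp [lucasU]
  | one => simp [lucasU]
  | more n ih ih1 => rw [lucasU, y_pow_add_two, ih, ih1]; ring

end Solution₁

open Solution₁

theorem isFundamental_of_forall_le (hd : 0 < d) {a : Solution₁ d} (hx : 0 < a.x) (hy : 0 < a.y)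
    (hmin : ∀ x y : ℤ, 0 < x → 0 < y → x ^ 2 - d * y ^ 2 = 1 → a.x ≤ x) :
    IsFundamental a := by
  refine ⟨by nlinarith [a.prop, mul_pos hd (pow_pos hy 2)], hy, fun {b} hb => ?_⟩
  have hby : b.y ≠ 0 := y_ne_zero_of_one_lt_x hb
  exact hmin b.x |b.y| (zero_lt_one.trans hb) (abs_pos.mpr hby) (by rw [sq_abs]; exact b.prop)

theorem IsFundamental.exists_pow_of_pos {a₁ : Solution₁ d} (h : IsFundamental a₁) {x y : ℤ}
    (hx : 0 < x) (hy : 0 < y) (hxy : x ^ 2 - d * y ^ 2 = 1) :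
    ∃ n : ℕ, 1 ≤ n ∧ x = (a₁ ^ n).x ∧ y = (a₁ ^ n).y := by
  obtain ⟨n, hn⟩ := h.eq_pow_of_nonneg (a := mk x y hxy) hx hy.le
  have hcoord : x = (a₁ ^ n).x ∧ y = (a₁ ^ n).y := by rw [← hn]; exact ⟨rfl, rfl⟩
  refine ⟨n, Nat.one_le_iff_ne_zero.mpr ?_, hcoord⟩
  rintro rfl
  simp [hcoord.2] at hy

end Pell

open Pell Pell.Solution₁ in
theorem stmt_15_general (d : ℤ) (hd : 0 < d) (x₁ y₁ : ℤ)
    (hx₁ : 0 < x₁) (hy₁ : 0 < y₁) (hfund : x₁ ^ 2 - d * y₁ ^ 2 = 1)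
    (hmin : ∀ x y : ℤ, 0 < x → 0 < y → x ^ 2 - d * y ^ 2 = 1 → x₁ ≤ x)
    (x y : ℤ) (hx : 0 < x) (hy : 0 < y) :
    x ^ 2 - d * y ^ 2 = 1 ↔
      ∃ n : ℕ, 1 ≤ n ∧ 2 * x = lucasV (2 * x₁) n ∧ y = y₁ * lucasU (2 * x₁) n := by
  set a₁ : Solution₁ d := mk x₁ y₁ hfund
  have ha₁ : IsFundamental a₁ := isFundamental_of_forall_le hd hx₁ hy₁ hmin
  have hV (n : ℕ) : 2 * (a₁ ^ n).x = lucasV (2 * x₁) n := two_mul_x_pow_eq_lucasV a₁ n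
  have hU (n : ℕ) : (a₁ ^ n).y = y₁ * lucasU (2 * x₁) n := y_pow_eq_mul_lucasU a₁ n
  constructor
  · intro hxy
    obtain ⟨n, hn, rfl, rfl⟩ := ha₁.exists_pow_of_pos hx hy hxy
    exact ⟨n, hn, hV n, hU n⟩
  · rintro ⟨n, -, hVn, rfl⟩
    obtain rfl : x = (a₁ ^ n).x := by linarith [hV n]
    rw [← hU]
    exact (a₁ ^ n).prop

theorem stmt_15 (d : ℤ) (hd : 0 < d) (hns : ¬ IsSquare d) (x₁ y₁ : ℤ)
    (hx₁ : 0 < x₁) (hy₁ : 0 < y₁) (hfund : x₁ ^ 2 - d * y₁ ^ 2 = 1)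
    (hmin : ∀ x y : ℤ, 0 < x → 0 < y → x ^ 2 - d * y ^ 2 = 1 → x₁ ≤ x)
    (x y : ℤ) (hx : 0 < x) (hy : 0 < y) :
    x ^ 2 - d * y ^ 2 = 1 ↔
      ∃ n : ℕ, 1 ≤ n ∧ 2 * x = lucasV (2 * x₁) n ∧ y = y₁ * lucasU (2 * x₁) n :=
  stmt_15_general d hd x₁ y₁ hx₁ hy₁ hfund hmin x y hx hy
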